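/- Let {s_a, p_A} be a representation of the labeled space (E,L,𝔅̄) in a C*-algebra such that p_C ≠ 0 for every nonempty C ∈ 𝔅̄. Let α_1,…,α_n ∈ L*(E) be distinct labeled paths all of the same length l ≥ 1, and let A ∈ 𝔅̄ satisfy A ⊆ ∪_{i=1}^n r(A,α_i). Then p_A is an infinite projection provided one of the following holds: (i) the union over i of the sets of initial segments of α_i is a proper subset of L(AE^{≤l}); (ii) r(A,α_i')_sk ≠ ∅ for some i and some initial segment α_i' of α_i; (iii) A is a proper subset of ∪_{i=1}^n r(A,α_i). -/

import Mathlib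

/-! # Common framework for labeled graph C*-algebras

Directed graphs, finite paths, labeled spaces `(E, L, 𝔅̄)` where `𝔅̄` is the
smallest accommodating set closed under relative complements (and containing
the sink parts of its members), loops and generalized loops, representations
of labeled spaces in C*-algebras, gauge actions, infinite projections,
AF algebras, and closed two-sided ideals. -/

noncomputable section

/-- A directed graph with vertex set `V` and edge set `E`. -/
structure DirGraph (V : Type*) (E : Type*) where
  src : E → V
  rng : E → V

variable {V E 𝒜 : Type*}

/-- A (finite) path of positive length in a directed graph: a nonempty list of
composable edges. -/
structure GPath (G : DirGraph V E) where
  edges : List E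
  ne : edges ≠ []
  chain : edges.Chain' fun e f => G.rng e = G.src f

namespace GPath

variable {G : DirGraph V E}

/-- The source vertex of a path. -/
def source (p : GPath G) : V := G.src (p.edges.head p.ne)

/-- The range vertex of a path. -/
def range (p : GPath G) : V := G.rng (p.edges.getLast p.ne)

/-- The length of a path. -/
def length (p : GPath G) : ℕ := p.edges.length

/-- The label word of a path under a labeling `L`. -/
def label (L : E → 𝒜) (p : GPath G) : List 𝒜 := p.edges.map L

end GPath

/-- The set of sinks of a graph (vertices emitting no edge). -/
def DirGraph.sinks (G : DirGraph V E) : Set V := {v | ∀ e, G.src e ≠ v}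

/-- `w ∈ L*(E)`: `w` is the label of some path of positive length. -/
def IsLabelWord (G : DirGraph V E) (L : E → 𝒜) (w : List 𝒜) : Prop :=
  ∃ p : GPath G, p.label L = w

/-- The range `r(w)` of a labeled path `w`. -/
def rngW (G : DirGraph V E) (L : E → 𝒜) (w : List 𝒜) : Set V :=
  {v | ∃ p : GPath G, p.label L = w ∧ p.range = v}

/-- The relative range `r(A, w)` of a labeled path `w` with respect to `A`. -/
def relRng (G : DirGraph V E) (L : E → 𝒜) (A : Set V) (w : List 𝒜) : Set V :=
  {v | ∃ p : GPath G, p.label L = w ∧ p.source ∈ A ∧ p.range = v}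

/-- `L(A E^n)`: labels of paths of length exactly `n` with source in `A`. -/
def labelsFromLen (G : DirGraph V E) (L : E → 𝒜) (A : Set V) (n : ℕ) : Set (List 𝒜) :=
  {w | ∃ p : GPath G, p.source ∈ A ∧ p.length = n ∧ p.label L = w}

/-- `L(A E^{≤n})`: labels of paths of length between `1` and `n` with source in `A`. -/
def labelsFromLe (G : DirGraph V E) (L : E → 𝒜) (A : Set V) (n : ℕ) : Set (List 𝒜) :=
  {w | ∃ p : GPath G, p.source ∈ A ∧ p.length ≤ n ∧ p.label L = w}

/-- `L(A E^{≥n})`: labels of paths of length at least `n` (and at least `1`)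
with source in `A`. -/
def labelsFromGe (G : DirGraph V E) (L : E → 𝒜) (A : Set V) (n : ℕ) : Set (List 𝒜) :=
  {w | ∃ p : GPath G, p.source ∈ A ∧ n ≤ p.length ∧ p.label L = w}

/-- `L(E^n A)`: labels of paths of length exactly `n` with range in `A`. -/
def labelsToLen (G : DirGraph V E) (L : E → 𝒜) (n : ℕ) (A : Set V) : Set (List 𝒜) :=
  {w | ∃ p : GPath G, p.range ∈ A ∧ p.length = n ∧ p.label L = w}

/-- `L(E^{≤l} v)`: labels of paths of length between `1` and `l` with range `v`. -/
def labelsToLe (G : DirGraph V E) (L : E → 𝒜) (l : ℕ) (v : V) : Set (List 𝒜) :=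
  {w | ∃ p : GPath G, p.range = v ∧ p.length ≤ l ∧ p.label L = w}

/-- `𝔅̄`: the smallest accommodating set for `(E, L)` (containing the ranges
`r(α)` for `α ∈ L*(E)` and closed under relative ranges, finite intersections
and finite unions) that is moreover closed under relative complements and
contains `A_sk = A ∩ sinks` for every `A` belonging to it. -/
inductive Bbar (G : DirGraph V E) (L : E → 𝒜) : Set V → Prop
  | base (w : List 𝒜) (hw : IsLabelWord G L w) : Bbar G L (rngW G L w)
  | rel (A : Set V) (w : List 𝒜) (hA : Bbar G L A) (hw : IsLabelWord G L w) :
      Bbar G L (relRng G L A w)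
  | inter (A B : Set V) (hA : Bbar G L A) (hB : Bbar G L B) : Bbar G L (A ∩ B)
  | union (A B : Set V) (hA : Bbar G L A) (hB : Bbar G L B) : Bbar G L (A ∪ B)
  | diff (A B : Set V) (hA : Bbar G L A) (hB : Bbar G L B) : Bbar G L (A \ B)
  | sk (A : Set V) (hA : Bbar G L A) : Bbar G L (A ∩ G.sinks)

/-- The standing assumptions on a labeled space `(E, L, 𝔅̄)`: weakly
left-resolving, set-finite, receiver set-finite, and no sink is a source. -/
structure StandingAssumptions (G : DirGraph V E) (L : E → 𝒜) : Prop where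
  wlr : ∀ A B : Set V, Bbar G L A → Bbar G L B → ∀ w : List 𝒜, IsLabelWord G L w →
    relRng G L A w ∩ relRng G L B w = relRng G L (A ∩ B) w
  setFinite : ∀ A : Set V, Bbar G L A → ∀ n : ℕ, 1 ≤ n → (labelsFromLen G L A n).Finite
  receiverSetFinite : ∀ A : Set V, Bbar G L A → ∀ n : ℕ, 1 ≤ n → (labelsToLen G L n A).Finite
  sinkNotSource : ∀ v ∈ G.sinks, ∃ e, G.rng e = v

/-- The `n`-fold concatenation `w^n` of a word `w`. -/
def wordPow (w : List 𝒜) (n : ℕ) : List 𝒜 := (List.replicate n w).flatten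

/-- A labeled path is repeatable if all its powers `w^n`, `n ≥ 1`, are again
labeled paths. -/
def Repeatable (G : DirGraph V E) (L : E → 𝒜) (w : List 𝒜) : Prop :=
  ∀ n : ℕ, 1 ≤ n → IsLabelWord G L (wordPow w n)

/-- The generalized vertex `[v]_l`: all non-source vertices receiving exactly
the same labeled paths of length at most `l` as `v` does. -/
def gvtx (G : DirGraph V E) (L : E → 𝒜) (l : ℕ) (v : V) : Set V :=
  {u | (∃ e, G.rng e = u) ∧ labelsToLe G L l u = labelsToLe G L l v}

/-- A generalized loop at `A`: a labeled path `α ∈ L(A E^{≥1} A)`. -/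
def IsGenLoop (G : DirGraph V E) (L : E → 𝒜) (A : Set V) (α : List 𝒜) : Prop :=
  ∃ p : GPath G, p.label L = α ∧ p.source ∈ A ∧ p.range ∈ A

/-- A loop at `A`: a generalized loop `α` at `A` such that `A ⊆ r(A, α)`. -/
def IsLoop (G : DirGraph V E) (L : E → 𝒜) (A : Set V) (α : List 𝒜) : Prop :=
  IsGenLoop G L A α ∧ A ⊆ relRng G L A α

/-- The nonempty initial segments (initial paths) of a word `α`. -/
def initialSegs (α : List 𝒜) : Set (List 𝒜) := {w | w ≠ [] ∧ w <+: α}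

/-- A loop `α` at `A` has an exit if (i) the initial segments of `α` form a
proper subset of `L(A E^{≤|α|})`, or (ii) `r(A, α_{[1,i]})` contains a sink for
some `1 ≤ i ≤ |α|`, or (iii) `A` is a proper subset of `r(A, α)`. -/
def HasExitLoop (G : DirGraph V E) (L : E → 𝒜) (A : Set V) (α : List 𝒜) : Prop :=
  initialSegs α ⊂ labelsFromLe G L A α.length ∨
  (∃ k : ℕ, 1 ≤ k ∧ k ≤ α.length ∧ (relRng G L A (α.take k) ∩ G.sinks).Nonempty) ∨
  A ⊂ relRng G L A α

/-- `A_0 E^{≤K} A_1 ⋯ E^{≤K} A_m ≠ ∅`: existence of `m` consecutively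
composable paths, each of length between `1` and `K`, the `j`-th going from
`As j` to `As (j+1)`. -/
def ChainExists (G : DirGraph V E) (As : ℕ → Set V) (K m : ℕ) : Prop :=
  ∃ xs : Fin m → GPath G,
    (∀ j : Fin m, (xs j).length ≤ K ∧ (xs j).source ∈ As j.val ∧
      (xs j).range ∈ As (j.val + 1)) ∧
    ∀ (j : ℕ) (h : j + 1 < m),
      (xs ⟨j, Nat.lt_of_succ_lt h⟩).range = (xs ⟨j + 1, h⟩).source

/-- Same as `ChainExists` but with all paths of length exactly `K`
(i.e. `A_0 E^K A_1 ⋯ E^K A_m ≠ ∅`). -/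
def ChainExistsExact (G : DirGraph V E) (As : ℕ → Set V) (K m : ℕ) : Prop :=
  ∃ xs : Fin m → GPath G,
    (∀ j : Fin m, (xs j).length = K ∧ (xs j).source ∈ As j.val ∧
      (xs j).range ∈ As (j.val + 1)) ∧
    ∀ (j : ℕ) (h : j + 1 < m),
      (xs ⟨j, Nat.lt_of_succ_lt h⟩).range = (xs ⟨j + 1, h⟩).source

/-- Condition (a): for every finite family `A_1, …, A_N` in `𝔅̄` and every
`K ≥ 1` there is `m₀ ≥ 1` such that
`A_{i_1} E^{≤K} A_{i_2} ⋯ E^{≤K} A_{i_n} = ∅` (`n` sets, `n - 1` path factors)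
for all `n > m₀` and all choices of indices. -/
def CondA (G : DirGraph V E) (L : E → 𝒜) : Prop :=
  ∀ (N : ℕ) (As : Fin N → Set V), (∀ i, Bbar G L (As i)) → ∀ K : ℕ, 1 ≤ K →
    ∃ m0 : ℕ, 1 ≤ m0 ∧ ∀ n : ℕ, m0 < n → ∀ ι : ℕ → Fin N,
      ¬ ChainExists G (fun j => As (ι j)) K (n - 1)

/-- A word is agreeable (for level `l`) if it is of the form `β^k β'` with
`β, β' ∈ L(E^{≤l})` and `β'` a nonempty initial segment of `β`. -/
def AgreeableW (G : DirGraph V E) (L : E → 𝒜) (l : ℕ) (α : List 𝒜) : Prop :=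
  ∃ (k : ℕ) (β β' : List 𝒜), IsLabelWord G L β ∧ IsLabelWord G L β' ∧
    β.length ≤ l ∧ β' ≠ [] ∧ β' <+: β ∧ α = wordPow β k ++ β'

/-- A representation of the labeled space `(E, L, 𝔅̄)` in a (C*-)algebra `B`:
projections `p A`, `A ∈ 𝔅̄`, and partial isometries `s a`, `a ∈ 𝒜`, satisfying
the defining relations of a labeled graph C*-algebra. -/
structure LRep (G : DirGraph V E) (L : E → 𝒜) (B : Type*)
    [NonUnitalRing B] [StarRing B] where
  p : Set V → B
  s : 𝒜 → B
  p_empty : p ∅ = 0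
  p_sa : ∀ A : Set V, Bbar G L A → star (p A) = p A
  p_mul : ∀ A A' : Set V, Bbar G L A → Bbar G L A' → p A * p A' = p (A ∩ A')
  p_union : ∀ A A' : Set V, Bbar G L A → Bbar G L A' →
    p (A ∪ A') = p A + p A' - p (A ∩ A')
  s_pi : ∀ a : 𝒜, s a * star (s a) * s a = s a
  p_s : ∀ (A : Set V) (a : 𝒜), Bbar G L A → p A * s a = s a * p (relRng G L A [a])
  s_s : ∀ a : 𝒜, star (s a) * s a = p (rngW G L [a])
  s_orth : ∀ a b : 𝒜, a ≠ b → star (s a) * s b = 0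
  ck : ∀ A : Set V, Bbar G L A →
    p A = (∑ᶠ a ∈ {a : 𝒜 | ∃ e, G.src e ∈ A ∧ L e = a},
      s a * p (relRng G L A [a]) * star (s a)) + p (A ∩ G.sinks)

/-- `s_α` for a word `α`: the product of the partial isometries of its letters
(junk value `0` on the empty word, which is never used). -/
def sWord {B : Type*} [NonUnitalRing B] (s : 𝒜 → B) : List 𝒜 → B
  | [] => 0
  | [a] => s a
  | a :: b :: w => s a * sWord s (b :: w)

/-- The range of a word in `L^#(E)` (`none` is the empty word, with range all
of `E^0`). -/
def owordRng (G : DirGraph V E) (L : E → 𝒜) : Option (List 𝒜) → Set V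
  | none => Set.univ
  | some w => rngW G L w

/-- The relative range of a word in `L^#(E)` with respect to `A` (`none` is
the empty word, with `r(A, ε) = A`). -/
def relRngE (G : DirGraph V E) (L : E → 𝒜) (A : Set V) : Option (List 𝒜) → Set V
  | none => A
  | some w => relRng G L A w

/-- The element `s_α p_A s_β*` of a representation, where `α`, `β` are words in
`L^#(E)` (`none` being the empty word `ε` with `s_ε` the identity). -/
def LRep.elt {B : Type*} [NonUnitalRing B] [StarRing B] {G : DirGraph V E} {L : E → 𝒜}
    (rep : LRep G L B) : Option (List 𝒜) → Set V → Option (List 𝒜) → B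
  | none, A, none => rep.p A
  | some α, A, none => sWord rep.s α * rep.p A
  | none, A, some β => rep.p A * star (sWord rep.s β)
  | some α, A, some β => sWord rep.s α * rep.p A * star (sWord rep.s β)

/-- A projection `q` is infinite if there is a partial isometry `u` with
`u* u = q`, `u u* ≤ q` and `u u* ≠ q`. -/
def IsInfiniteProjection (B : Type*) [NonUnitalRing B] [StarRing B] [PartialOrder B]
    (q : B) : Prop :=
  star q = q ∧ q * q = q ∧ ∃ u : B, star u * u = q ∧ u * star u ≤ q ∧ u * star u ≠ q

/-- A C*-algebra is AF if every finite subset can be approximated within any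
`ε > 0` from a finite-dimensional *-subalgebra. -/
def IsAFAlgebra (B : Type*) [NonUnitalNormedRing B] [StarRing B] [NormedSpace ℂ B] : Prop :=
  ∀ (F : Finset B) (ε : ℝ), 0 < ε →
    ∃ D : NonUnitalStarSubalgebra ℂ B, FiniteDimensional ℂ D ∧
      ∀ x ∈ F, ∃ y ∈ (D : Set B), ‖x - y‖ < ε

/-- A gauge action for a representation: a strongly continuous action of the
circle group by *-automorphisms fixing the projections and scaling the
generating partial isometries. -/
structure GaugeAction {B : Type*} [NonUnitalCStarAlgebra B]
    (G : DirGraph V E) (L : E → 𝒜) (rep : LRep G L B) where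
  γ : Circle → B ≃⋆ₐ[ℂ] B
  γ_mul : ∀ z w : Circle, γ (z * w) = (γ w).trans (γ z)
  γ_continuous : ∀ x : B, Continuous fun z => γ z x
  γ_s : ∀ (z : Circle) (a : 𝒜), γ z (rep.s a) = (z : ℂ) • rep.s a
  γ_p : ∀ (z : Circle) (A : Set V), Bbar G L A → γ z (rep.p A) = rep.p A

/-- The representation generates `B` as a C*-algebra. -/
def GeneratesAlg {B : Type*} [NonUnitalCStarAlgebra B]
    (G : DirGraph V E) (L : E → 𝒜) (rep : LRep G L B) : Prop :=
  closure (NonUnitalStarAlgebra.adjoin ℂ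
    ({x : B | ∃ a : 𝒜, x = rep.s a} ∪ {x : B | ∃ A : Set V, Bbar G L A ∧ x = rep.p A}) : Set B)
    = Set.univ

/-- A closed two-sided ideal of a C*-algebra (as a set). -/
def IsClosedTwoSidedIdealSet (B : Type*) [NonUnitalNormedRing B] [NormedSpace ℂ B]
    (I : Set B) : Prop :=
  IsClosed I ∧ (0 : B) ∈ I ∧ (∀ x ∈ I, ∀ y ∈ I, x + y ∈ I) ∧
    (∀ (c : ℂ), ∀ x ∈ I, c • x ∈ I) ∧ ∀ x ∈ I, ∀ y : B, x * y ∈ I ∧ y * x ∈ I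

/-- The closed two-sided ideal generated by an element. -/
def closedIdealGen (B : Type*) [NonUnitalNormedRing B] [NormedSpace ℂ B] (q : B) : Set B :=
  ⋂₀ {I : Set B | IsClosedTwoSidedIdealSet B I ∧ q ∈ I}

/-! Disjointify the cover: the sets `B_i = A ∩ (r(A, α_i) \ ⋃_{j < i} r(A, α_j))` partition
`A`, and `v = ∑ᵢ s_{α_i} p_{B_i}` satisfies `v* v = p_A` because distinct labeled paths of equal
length give orthogonal partial isometries (`s_{α_i}* s_{α_j} = 0` for `i ≠ j`). So
`v v* = ∑ᵢ s_{α_i} p_{B_i} s_{α_i}*` is a subprojection of `p_A`, and each exit condition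
refutes `v v* = p_A` after compressing both sides by some `s_β`. If `β ∈ L(A E^{≤l})` is not
an initial segment of any `α_i`, the compression kills `v v*` but not `p_A`. Sinks are
annihilated by every `s_γ`, so after compressing by a proper initial segment of the `α_i` (or
not at all) `v v*` misses the sinks that `p_A` sees. A point of `r(A, α_i)` outside `A` lies
under `s_{α_i}* p_A s_{α_i} = p_{r(A, α_i)}` but not under
`s_{α_i}* v v* s_{α_i} = p_{r(α_i) ∩ B_i}`. -/

section LabeledPaths

variable {G : DirGraph V E} {L : E → 𝒜}

namespace GPath

def append (p q : GPath G) (h : p.range = q.source) : GPath G where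
  edges := p.edges ++ q.edges
  ne := by simp [p.ne]
  chain := by
    show List.IsChain _ (p.edges ++ q.edges)
    refine List.isChain_append.mpr ⟨p.chain, q.chain, ?_⟩
    intro x hx y hy
    rw [List.getLast?_eq_some_getLast p.ne, Option.mem_def, Option.some_inj] at hx
    rw [List.head?_eq_some_head q.ne, Option.mem_def, Option.some_inj] at hy
    rw [← hx, ← hy]
    exact h

lemma source_append (p q : GPath G) (h : p.range = q.source) :
    (p.append q h).source = p.source := by
  simp only [GPath.source, append, List.head_append]
  rw [dif_neg (by simpa using p.ne)]

lemma range_append (p q : GPath G) (h : p.range = q.source) :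
    (p.append q h).range = q.range := by
  simp only [GPath.range, append, List.getLast_append]
  rw [dif_neg (by simpa using q.ne)]

lemma label_append (p q : GPath G) (h : p.range = q.source) :
    (p.append q h).label L = p.label L ++ q.label L := by
  simp [GPath.label, append]

def take (p : GPath G) (k : ℕ) (hk : k ≠ 0) : GPath G where
  edges := p.edges.take k
  ne := by simp [List.take_eq_nil_iff, hk, p.ne]
  chain := p.chain.prefix (List.take_prefix _ _)

def drop (p : GPath G) (k : ℕ) (hk : k < p.length) : GPath G where
  edges := p.edges.drop k
  ne := by simp only [ne_eq, List.drop_eq_nil_iff, not_le]; exact hk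
  chain := p.chain.suffix (List.drop_suffix _ _)

lemma source_take (p : GPath G) (k : ℕ) (hk : k ≠ 0) : (p.take k hk).source = p.source := by
  simp only [GPath.source, take]
  rw [List.head_eq_getElem, List.head_eq_getElem p.ne, List.getElem_take]

lemma range_drop (p : GPath G) (k : ℕ) (hk : k < p.length) : (p.drop k hk).range = p.range := by
  simp only [GPath.range, drop]
  rw [List.getLast_eq_getElem, List.getLast_eq_getElem p.ne]
  simp only [List.getElem_drop, List.length_drop]
  congr 2
  simp only [GPath.length] at hk
  omega

lemma range_take_eq_source_drop (p : GPath G) (k : ℕ) (hk : k ≠ 0) (hk' : k < p.length) :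
    (p.take k hk).range = (p.drop k hk').source := by
  simp only [GPath.range, GPath.source, take, drop, GPath.length] at hk' ⊢
  rw [List.getLast_eq_getElem, List.head_eq_getElem]
  simp only [List.getElem_take, List.getElem_drop, List.length_take]
  convert List.isChain_iff_getElem.mp p.chain (k - 1) (by omega) using 3 <;> omega

lemma label_take (p : GPath G) (k : ℕ) (hk : k ≠ 0) :
    (p.take k hk).label L = (p.label L).take k := by
  simp [GPath.label, take, List.map_take]

lemma label_drop (p : GPath G) (k : ℕ) (hk : k < p.length) :
    (p.drop k hk).label L = (p.label L).drop k := by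
  simp [GPath.label, drop, List.map_drop]

lemma length_label (p : GPath G) : (p.label L).length = p.length := by
  simp [GPath.label, GPath.length]

lemma label_ne_nil (p : GPath G) : p.label L ≠ [] := by
  simp [GPath.label, p.ne]

end GPath

lemma relRng_append (C : Set V) {α β : List 𝒜} (hα : α ≠ []) (hβ : β ≠ []) :
    relRng G L C (α ++ β) = relRng G L (relRng G L C α) β := by
  ext v
  constructor
  · rintro ⟨p, hlab, hsrc, rfl⟩
    have hk : α.length ≠ 0 := by simpa using hα
    have hk' : α.length < p.length := by
      have hβ' : β.length ≠ 0 := by simpa using hβ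
      have := congrArg List.length hlab
      rw [p.length_label, List.length_append] at this
      omega
    refine ⟨p.drop α.length hk', by simp [p.label_drop, hlab],
      ⟨p.take α.length hk, ?_, ?_, ?_⟩, p.range_drop _ hk'⟩
    · simp [p.label_take, hlab]
    · rwa [p.source_take]
    · exact p.range_take_eq_source_drop _ hk hk'
  · rintro ⟨q, hqlab, ⟨p, hplab, hpsrc, hprng⟩, rfl⟩
    exact ⟨p.append q hprng, by rw [GPath.label_append, hplab, hqlab],
      by rwa [GPath.source_append], GPath.range_append _ _ _⟩

lemma rngW_eq_relRng_univ (w : List 𝒜) : rngW G L w = relRng G L Set.univ w := by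
  ext v
  simp [rngW, relRng]

lemma rngW_append {α β : List 𝒜} (hα : α ≠ []) (hβ : β ≠ []) :
    rngW G L (α ++ β) = relRng G L (rngW G L α) β := by
  rw [rngW_eq_relRng_univ, relRng_append _ hα hβ, ← rngW_eq_relRng_univ]

lemma relRng_subset_rngW (C : Set V) (w : List 𝒜) : relRng G L C w ⊆ rngW G L w :=
  fun _ ⟨p, hlab, _, hrng⟩ => ⟨p, hlab, hrng⟩

lemma relRng_eq_empty_of_subset_sinks {D : Set V} (hD : D ⊆ G.sinks) (w : List 𝒜) :
    relRng G L D w = ∅ :=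
  Set.eq_empty_of_forall_notMem fun _ ⟨p, _, hsrc, _⟩ => hD hsrc (p.edges.head p.ne) rfl

lemma isLabelWord_singleton (hL : Function.Surjective L) (a : 𝒜) : IsLabelWord G L [a] := by
  obtain ⟨e, rfl⟩ := hL a
  exact ⟨⟨[e], List.cons_ne_nil e [], List.isChain_singleton e⟩, rfl⟩

end LabeledPaths

section Accommodating

variable {G : DirGraph V E} {L : E → 𝒜}

lemma bbar_empty {A : Set V} (hA : Bbar G L A) : Bbar G L ∅ := by
  simpa using Bbar.diff A A hA hA

lemma bbar_relRng (hL : Function.Surjective L) {C : Set V} (hC : Bbar G L C)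
    {w : List 𝒜} (hw : w ≠ []) : Bbar G L (relRng G L C w) := by
  induction w generalizing C with
  | nil => exact absurd rfl hw
  | cons a t ih =>
    have hCa := Bbar.rel C [a] hC (isLabelWord_singleton hL a)
    rcases eq_or_ne t [] with rfl | ht
    · exact hCa
    · rw [← List.singleton_append, relRng_append C (List.cons_ne_nil a []) ht]
      exact ih hCa ht

lemma bbar_rngW (hL : Function.Surjective L) {w : List 𝒜} (hw : w ≠ []) :
    Bbar G L (rngW G L w) := by
  obtain ⟨a, t, rfl⟩ := List.exists_cons_of_ne_nil hw
  have ha := Bbar.base [a] (isLabelWord_singleton (G := G) hL a)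
  rcases eq_or_ne t [] with rfl | ht
  · exact ha
  · rw [← List.singleton_append, rngW_append (List.cons_ne_nil a []) ht]
    exact bbar_relRng hL ha ht

lemma bbar_biUnion_finset {ι : Type*} (h₀ : Bbar G L ∅) {f : ι → Set V}
    (hf : ∀ i, Bbar G L (f i)) (s : Finset ι) : Bbar G L (⋃ i ∈ s, f i) := by
  classical
  induction s using Finset.induction_on with
  | empty => simpa using h₀
  | insert a s _ ih =>
    rw [Finset.set_biUnion_insert]
    exact Bbar.union _ _ (hf a) ih

structure IsSubordinatePartition {ι : Type*} (G : DirGraph V E) (L : E → 𝒜) (A : Set V)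
    (αs : ι → List 𝒜) (Bs : ι → Set V) : Prop where
  bbar : ∀ i, Bbar G L (Bs i)
  subset_relRng : ∀ i, Bs i ⊆ relRng G L A (αs i)
  pairwise_disjoint : Pairwise fun i j => Disjoint (Bs i) (Bs j)
  iUnion_eq : ⋃ i, Bs i = A

lemma IsSubordinatePartition.subset {ι : Type*} {A : Set V} {αs : ι → List 𝒜}
    {Bs : ι → Set V} (hB : IsSubordinatePartition G L A αs Bs) (i : ι) : Bs i ⊆ A :=
  hB.iUnion_eq ▸ Set.subset_iUnion Bs i

theorem exists_isSubordinatePartition {ι : Type*} [LinearOrder ι] [LocallyFiniteOrderBot ι]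
    (hL : Function.Surjective L) {A : Set V} (hA : Bbar G L A) {αs : ι → List 𝒜}
    (hαs : ∀ i, αs i ≠ []) (hcover : A ⊆ ⋃ i, relRng G L A (αs i)) :
    ∃ Bs, IsSubordinatePartition G L A αs Bs := by
  set f := fun i => relRng G L A (αs i)
  have hf : ∀ i, Bbar G L (f i) := fun i => bbar_relRng hL hA (hαs i)
  refine ⟨fun i => A ∩ disjointed f i, ⟨fun i => Bbar.inter _ _ hA ?_,
    fun i => Set.inter_subset_right.trans (disjointed_subset f i),
    fun i j hij => (disjoint_disjointed f hij).mono Set.inter_subset_right Set.inter_subset_right,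
    ?_⟩⟩
  · exact disjointedRec (fun t j ht => Bbar.diff _ _ ht (hf j)) (hf i)
  · rw [← Set.inter_iUnion, iUnion_disjointed, Set.inter_eq_left.mpr hcover]

end Accommodating

lemma sWord_cons {B : Type*} [NonUnitalRing B] (s : 𝒜 → B) (a : 𝒜) {w : List 𝒜}
    (hw : w ≠ []) : sWord s (a :: w) = s a * sWord s w := by
  obtain ⟨b, t, rfl⟩ := List.exists_cons_of_ne_nil hw
  rfl

lemma sWord_append {B : Type*} [NonUnitalRing B] (s : 𝒜 → B) {α β : List 𝒜}
    (hα : α ≠ []) (hβ : β ≠ []) : sWord s (α ++ β) = sWord s α * sWord s β := by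
  induction α with
  | nil => exact absurd rfl hα
  | cons a t ih =>
    rcases eq_or_ne t [] with rfl | ht
    · exact sWord_cons s a hβ
    · rw [List.cons_append, sWord_cons s a (List.append_ne_nil_of_left_ne_nil ht β), ih ht,
        sWord_cons s a ht, mul_assoc]

lemma star_mul_sum_conj_mul {R ι : Type*} [NonUnitalSemiring R] [StarRing R] (s : Finset ι)
    (b : R) (a x : ι → R) :
    star b * (∑ i ∈ s, a i * x i * star (a i)) * b
      = ∑ i ∈ s, star b * a i * x i * star (star b * a i) := by
  simp only [Finset.mul_sum, Finset.sum_mul, star_mul, star_star, mul_assoc]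

theorem isInfiniteProjection_of_star_mul_self_eq {R : Type*} [NonUnitalRing R] [StarRing R]
    [PartialOrder R] [StarOrderedRing R] {p v : R} (hp : IsStarProjection p)
    (hvv : star v * v = p) (hpv : p * v = v) (hvp : v * p = v) (hne : v * star v ≠ p) :
    IsInfiniteProjection R p := by
  have hq : IsStarProjection (v * star v) :=
    { isIdempotentElem := by
        rw [IsIdempotentElem, mul_assoc, ← mul_assoc (star v), hvv, ← mul_assoc, hvp]
      isSelfAdjoint := IsSelfAdjoint.mul_star_self v }
  refine ⟨hp.isSelfAdjoint.star_eq, hp.isIdempotentElem.eq, v, hvv,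
    hq.le_of_mul_eq_right hp ?_, hne⟩
  rw [← mul_assoc, hpv]

namespace LRep

variable {G : DirGraph V E} {L : E → 𝒜} {B : Type*} [NonUnitalRing B] [StarRing B]
  (rep : LRep G L B)

lemma isStarProjection_p {A : Set V} (hA : Bbar G L A) : IsStarProjection (rep.p A) :=
  { isIdempotentElem := by rw [IsIdempotentElem, rep.p_mul A A hA hA, Set.inter_self]
    isSelfAdjoint := rep.p_sa A hA }

lemma p_mul_p_of_subset {C D : Set V} (hC : Bbar G L C) (hD : Bbar G L D) (h : C ⊆ D) :
    rep.p C * rep.p D = rep.p C := by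
  rw [rep.p_mul C D hC hD, Set.inter_eq_self_of_subset_left h]

lemma p_mul_p_of_superset {C D : Set V} (hC : Bbar G L C) (hD : Bbar G L D) (h : D ⊆ C) :
    rep.p C * rep.p D = rep.p D := by
  rw [rep.p_mul C D hC hD, Set.inter_eq_self_of_subset_right h]

lemma p_mul_p_of_disjoint {C D : Set V} (hC : Bbar G L C) (hD : Bbar G L D)
    (h : Disjoint C D) : rep.p C * rep.p D = 0 := by
  rw [rep.p_mul C D hC hD, h.inter_eq, rep.p_empty]

lemma p_biUnion_finset {ι : Type*} (h₀ : Bbar G L ∅) {f : ι → Set V}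
    (hf : ∀ i, Bbar G L (f i)) (hd : Pairwise fun i j => Disjoint (f i) (f j))
    (s : Finset ι) : rep.p (⋃ i ∈ s, f i) = ∑ i ∈ s, rep.p (f i) := by
  classical
  induction s using Finset.induction_on with
  | empty => simpa using rep.p_empty
  | insert a s ha ih =>
    have hdisj : Disjoint (f a) (⋃ i ∈ s, f i) :=
      Set.disjoint_iUnion₂_right.mpr fun i hi => hd (ne_of_mem_of_not_mem hi ha).symm
    rw [Finset.set_biUnion_insert, Finset.sum_insert ha,
      rep.p_union _ _ (hf a) (bbar_biUnion_finset h₀ hf s), hdisj.inter_eq, rep.p_empty,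
      sub_zero, ih]

section Surjective

variable (hL : Function.Surjective L)
include hL

lemma p_mul_sWord {C : Set V} (hC : Bbar G L C) {w : List 𝒜} (hw : w ≠ []) :
    rep.p C * sWord rep.s w = sWord rep.s w * rep.p (relRng G L C w) := by
  induction w generalizing C with
  | nil => exact absurd rfl hw
  | cons a t ih =>
    rcases eq_or_ne t [] with rfl | ht
    · exact rep.p_s C a hC
    · have hCa := Bbar.rel C [a] hC (isLabelWord_singleton hL a)
      rw [sWord_cons rep.s a ht, ← mul_assoc, rep.p_s C a hC, mul_assoc, ih hCa ht,
        ← relRng_append C (List.cons_ne_nil a []) ht, ← mul_assoc]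
      rfl

lemma star_sWord_mul_self {w : List 𝒜} (hw : w ≠ []) :
    star (sWord rep.s w) * sWord rep.s w = rep.p (rngW G L w) := by
  induction w with
  | nil => exact absurd rfl hw
  | cons a t ih =>
    rcases eq_or_ne t [] with rfl | ht
    · exact rep.s_s a
    · have ha := Bbar.base [a] (isLabelWord_singleton (G := G) hL a)
      rw [sWord_cons rep.s a ht, star_mul, mul_assoc, ← mul_assoc (star (rep.s a)), rep.s_s a,
        rep.p_mul_sWord hL ha ht, ← mul_assoc, ih ht,
        rep.p_mul_p_of_superset (bbar_rngW hL ht) (bbar_relRng hL ha ht)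
          (relRng_subset_rngW _ t),
        ← rngW_append (List.cons_ne_nil a []) ht]
      rfl

lemma star_sWord_mul_p_mul_sWord {C : Set V} (hC : Bbar G L C) {w : List 𝒜} (hw : w ≠ []) :
    star (sWord rep.s w) * rep.p C * sWord rep.s w = rep.p (relRng G L C w) := by
  rw [mul_assoc, rep.p_mul_sWord hL hC hw, ← mul_assoc, rep.star_sWord_mul_self hL hw,
    rep.p_mul_p_of_superset (bbar_rngW hL hw) (bbar_relRng hL hC hw) (relRng_subset_rngW C w)]

lemma star_sWord_mul_sWord_of_ne {v w : List 𝒜} (hlen : v.length = w.length) (hne : v ≠ w)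
    (hv : v ≠ []) : star (sWord rep.s v) * sWord rep.s w = 0 := by
  induction v generalizing w with
  | nil => exact absurd rfl hv
  | cons a t ih =>
    obtain ⟨b, u, rfl⟩ :=
      List.exists_cons_of_ne_nil (List.ne_nil_of_length_eq_add_one hlen.symm)
    have hlen' : t.length = u.length := by simpa using hlen
    rcases eq_or_ne t [] with rfl | ht
    · obtain rfl : u = [] := List.length_eq_zero_iff.mp hlen'.symm
      exact rep.s_orth a b fun hab => hne (hab ▸ rfl)
    · have hu : u ≠ [] := fun hu => ht (List.length_eq_zero_iff.mp (by simp [hlen', hu]))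
      rw [sWord_cons rep.s a ht, sWord_cons rep.s b hu, star_mul, mul_assoc,
        ← mul_assoc (star (rep.s a))]
      rcases eq_or_ne a b with rfl | hab
      · rw [rep.s_s a, rep.p_mul_sWord hL (Bbar.base [a] (isLabelWord_singleton hL a)) hu,
          ← mul_assoc, ih hlen' (fun htu => hne (htu ▸ rfl)) ht, zero_mul]
      · rw [rep.s_orth a b hab, zero_mul, mul_zero]

lemma star_sWord_mul_sWord_of_not_prefix {β w : List 𝒜} (hβ : β ≠ [])
    (hle : β.length ≤ w.length) (h : ¬ β <+: w) :
    star (sWord rep.s β) * sWord rep.s w = 0 := by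
  have hlen : β.length = (w.take β.length).length := by simp [hle]
  have hhead : star (sWord rep.s β) * sWord rep.s (w.take β.length) = 0 :=
    rep.star_sWord_mul_sWord_of_ne hL hlen (fun h' => h (h' ▸ List.take_prefix _ _)) hβ
  have htake : w.take β.length ≠ [] := by
    rw [← List.length_pos_iff, ← hlen]
    exact List.length_pos_iff.mpr hβ
  rw [← List.take_append_drop β.length w]
  rcases eq_or_ne (w.drop β.length) [] with hd | hd
  · rwa [hd, List.append_nil]
  · rw [sWord_append rep.s htake hd, ← mul_assoc, hhead, zero_mul]

lemma p_mul_sWord_eq_zero_of_subset_sinks {D : Set V} (hD : Bbar G L D) (hDs : D ⊆ G.sinks)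
    {w : List 𝒜} (hw : w ≠ []) : rep.p D * sWord rep.s w = 0 := by
  rw [rep.p_mul_sWord hL hD hw, relRng_eq_empty_of_subset_sinks hDs w, rep.p_empty, mul_zero]

lemma p_mul_star_sWord_mul_sWord_eq_zero_of_subset_sinks {D : Set V} (hD : Bbar G L D)
    (hDs : D ⊆ G.sinks) {β w : List 𝒜} (hβ : β ≠ []) (hlt : β.length < w.length) :
    rep.p D * (star (sWord rep.s β) * sWord rep.s w) = 0 := by
  by_cases hpre : β <+: w
  · obtain ⟨γ, rfl⟩ := hpre
    have hγ : γ ≠ [] := by rintro rfl; simp at hlt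
    rw [sWord_append rep.s hβ hγ, ← mul_assoc (star _), rep.star_sWord_mul_self hL hβ,
      ← mul_assoc,
      rep.p_mul _ _ hD (bbar_rngW hL hβ),
      rep.p_mul_sWord_eq_zero_of_subset_sinks hL (Bbar.inter _ _ hD (bbar_rngW hL hβ))
        (Set.inter_subset_left.trans hDs) hγ]
  · rw [rep.star_sWord_mul_sWord_of_not_prefix hL hβ hlt.le hpre, mul_zero]

end Surjective

variable {ι : Type*} [Fintype ι]

def coverIsometry (αs : ι → List 𝒜) (Bs : ι → Set V) : B :=
  ∑ i, sWord rep.s (αs i) * rep.p (Bs i)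

def conjSum (αs : ι → List 𝒜) (Bs : ι → Set V) : B :=
  ∑ i, sWord rep.s (αs i) * rep.p (Bs i) * star (sWord rep.s (αs i))

lemma star_sWord_mul_conjSum_mul_sWord (αs : ι → List 𝒜) (Bs : ι → Set V)
    (β : List 𝒜) :
    star (sWord rep.s β) * rep.conjSum αs Bs * sWord rep.s β
      = ∑ i, star (sWord rep.s β) * sWord rep.s (αs i) * rep.p (Bs i)
          * star (star (sWord rep.s β) * sWord rep.s (αs i)) :=
  star_mul_sum_conj_mul _ _ _ _

variable {A : Set V} {αs : ι → List 𝒜} {Bs : ι → Set V}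

lemma coverIsometry_mul_p (hA : Bbar G L A) (hB : IsSubordinatePartition G L A αs Bs) :
    rep.coverIsometry αs Bs * rep.p A = rep.coverIsometry αs Bs := by
  simp only [coverIsometry, Finset.sum_mul]
  refine Finset.sum_congr rfl fun i _ => ?_
  rw [mul_assoc, rep.p_mul_p_of_subset (hB.bbar i) hA (hB.subset i)]

lemma coverIsometry_mul_star_self [DecidableEq ι] (hB : IsSubordinatePartition G L A αs Bs) :
    rep.coverIsometry αs Bs * star (rep.coverIsometry αs Bs) = rep.conjSum αs Bs := by
  have hterm : ∀ i j,
      sWord rep.s (αs i) * rep.p (Bs i) * star (sWord rep.s (αs j) * rep.p (Bs j))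
        = if i = j then sWord rep.s (αs i) * rep.p (Bs i) * star (sWord rep.s (αs i)) else 0 := by
    intro i j
    rw [star_mul, rep.p_sa _ (hB.bbar j), ← mul_assoc, mul_assoc _ (rep.p (Bs i))]
    split_ifs with hij
    · rw [hij, rep.p_mul _ _ (hB.bbar j) (hB.bbar j), Set.inter_self]
    · rw [rep.p_mul_p_of_disjoint (hB.bbar i) (hB.bbar j) (hB.pairwise_disjoint hij), mul_zero,
        zero_mul]
  simp only [coverIsometry, conjSum, star_sum, Finset.sum_mul_sum, hterm, Finset.sum_ite_eq,
    Finset.mem_univ, if_true]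

variable (hL : Function.Surjective L)
include hL

lemma p_mul_coverIsometry (hA : Bbar G L A) (hB : IsSubordinatePartition G L A αs Bs)
    (hαs : ∀ i, αs i ≠ []) :
    rep.p A * rep.coverIsometry αs Bs = rep.coverIsometry αs Bs := by
  simp only [coverIsometry, Finset.mul_sum]
  refine Finset.sum_congr rfl fun i _ => ?_
  rw [← mul_assoc, rep.p_mul_sWord hL hA (hαs i), mul_assoc,
    rep.p_mul_p_of_superset (bbar_relRng hL hA (hαs i)) (hB.bbar i) (hB.subset_relRng i)]

lemma star_coverIsometry_mul_self [DecidableEq ι] (hA : Bbar G L A)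
    (hB : IsSubordinatePartition G L A αs Bs) (hαs : ∀ i, αs i ≠ []) {l : ℕ}
    (hlen : ∀ i, (αs i).length = l) (hinj : Function.Injective αs) :
    star (rep.coverIsometry αs Bs) * rep.coverIsometry αs Bs = rep.p A := by
  have hterm : ∀ i j,
      star (sWord rep.s (αs i) * rep.p (Bs i)) * (sWord rep.s (αs j) * rep.p (Bs j))
        = if i = j then rep.p (Bs i) else 0 := by
    intro i j
    rw [star_mul, rep.p_sa _ (hB.bbar i), mul_assoc, ← mul_assoc (star _)]
    split_ifs with hij
    · subst hij
      have hBr : Bs i ⊆ rngW G L (αs i) := (hB.subset_relRng i).trans (relRng_subset_rngW _ _)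
      rw [rep.star_sWord_mul_self hL (hαs i),
        rep.p_mul_p_of_superset (bbar_rngW hL (hαs i)) (hB.bbar i) hBr,
        rep.p_mul _ _ (hB.bbar i) (hB.bbar i), Set.inter_self]
    · rw [rep.star_sWord_mul_sWord_of_ne hL (by rw [hlen, hlen]) (hinj.ne hij) (hαs i),
        zero_mul, mul_zero]
  simp only [coverIsometry, star_sum, Finset.sum_mul_sum, hterm, Finset.sum_ite_eq,
    Finset.mem_univ, if_true]
  rw [← rep.p_biUnion_finset (bbar_empty hA) hB.bbar hB.pairwise_disjoint, ← hB.iUnion_eq]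
  simp

section PEqConjSum

variable (hp : ∀ C : Set V, Bbar G L C → C.Nonempty → rep.p C ≠ 0)
  (hq : rep.p A = rep.conjSum αs Bs)
include hp hq

lemma labelsFromLe_subset_iUnion_initialSegs_of_p_eq_conjSum (hA : Bbar G L A) {l : ℕ}
    (hlen : ∀ i, (αs i).length = l) : labelsFromLe G L A l ⊆ ⋃ i, initialSegs (αs i) := by
  rintro β ⟨π, hπA, hπl, rfl⟩
  by_contra hβ
  have hne := π.label_ne_nil (L := L)
  have hzero : star (sWord rep.s (π.label L)) * rep.conjSum αs Bs * sWord rep.s (π.label L)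
      = 0 := by
    rw [star_sWord_mul_conjSum_mul_sWord]
    refine Finset.sum_eq_zero fun i _ => ?_
    rw [rep.star_sWord_mul_sWord_of_not_prefix hL hne (by rw [hlen i, π.length_label]; exact hπl)
      (fun hpre => hβ (Set.mem_iUnion.mpr ⟨i, hne, hpre⟩)), zero_mul, zero_mul]
  rw [← hq, rep.star_sWord_mul_p_mul_sWord hL hA hne] at hzero
  exact hp _ (bbar_relRng hL hA hne) ⟨π.range, π, rfl, hπA, rfl⟩ hzero

lemma relRng_inter_sinks_eq_empty_of_p_eq_conjSum (hA : Bbar G L A) {l : ℕ}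
    (hlen : ∀ i, (αs i).length = l) {β : List 𝒜} (hβ : β ≠ []) (hβl : β.length < l) :
    relRng G L A β ∩ G.sinks = ∅ := by
  have hR := bbar_relRng hL hA hβ
  have hD := Bbar.sk _ hR
  have hzero : rep.p (relRng G L A β ∩ G.sinks)
      * (star (sWord rep.s β) * rep.conjSum αs Bs * sWord rep.s β) = 0 := by
    rw [star_sWord_mul_conjSum_mul_sWord, Finset.mul_sum]
    refine Finset.sum_eq_zero fun i _ => ?_
    rw [← mul_assoc, ← mul_assoc, rep.p_mul_star_sWord_mul_sWord_eq_zero_of_subset_sinks hL hD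
      Set.inter_subset_right hβ (by rw [hlen i]; exact hβl), zero_mul, zero_mul]
  rw [← hq, rep.star_sWord_mul_p_mul_sWord hL hA hβ,
    rep.p_mul_p_of_subset hD hR Set.inter_subset_left] at hzero
  exact Set.not_nonempty_iff_eq_empty.mp fun hne => hp _ hD hne hzero

lemma inter_sinks_eq_empty_of_p_eq_conjSum (hA : Bbar G L A) (hαs : ∀ i, αs i ≠ []) :
    A ∩ G.sinks = ∅ := by
  have hD := Bbar.sk A hA
  have hzero : rep.p (A ∩ G.sinks) * rep.conjSum αs Bs = 0 := by
    rw [conjSum, Finset.mul_sum]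
    refine Finset.sum_eq_zero fun i _ => ?_
    rw [← mul_assoc, ← mul_assoc, rep.p_mul_sWord_eq_zero_of_subset_sinks hL hD
      Set.inter_subset_right (hαs i), zero_mul, zero_mul]
  rw [← hq, rep.p_mul_p_of_subset hD hA Set.inter_subset_left] at hzero
  exact Set.not_nonempty_iff_eq_empty.mp fun hne => hp _ hD hne hzero

lemma relRng_subset_of_p_eq_conjSum (hA : Bbar G L A) (hB : IsSubordinatePartition G L A αs Bs)
    (hαs : ∀ i, αs i ≠ []) {l : ℕ} (hlen : ∀ i, (αs i).length = l)
    (hinj : Function.Injective αs) (i : ι) : relRng G L A (αs i) ⊆ A := by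
  classical
  have hR := bbar_relRng hL hA (hαs i)
  have hr : Bbar G L (rngW G L (αs i)) := bbar_rngW hL (hαs i)
  have hD := Bbar.diff _ _ hR hA
  have hconj : star (sWord rep.s (αs i)) * rep.conjSum αs Bs * sWord rep.s (αs i)
      = rep.p (rngW G L (αs i)) * rep.p (Bs i) * rep.p (rngW G L (αs i)) := by
    rw [star_sWord_mul_conjSum_mul_sWord, Finset.sum_eq_single i]
    · rw [rep.star_sWord_mul_self hL (hαs i), rep.p_sa _ hr]
    · intro j _ hji
      rw [rep.star_sWord_mul_sWord_of_ne hL (by rw [hlen, hlen]) (hinj.ne hji.symm) (hαs i),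
        zero_mul, zero_mul]
    · simp
  have hzero : rep.p (relRng G L A (αs i) \ A) * rep.p (relRng G L A (αs i)) = 0 := by
    rw [← rep.star_sWord_mul_p_mul_sWord hL hA (hαs i), hq, hconj, ← mul_assoc, ← mul_assoc,
      rep.p_mul_p_of_subset hD hr (Set.sdiff_subset.trans (relRng_subset_rngW _ _)),
      rep.p_mul_p_of_disjoint hD (hB.bbar i) (Set.disjoint_sdiff_left.mono_right (hB.subset i)),
      zero_mul]
  rw [rep.p_mul_p_of_subset hD hR Set.sdiff_subset] at hzero
  exact Set.sdiff_eq_empty.mp (Set.not_nonempty_iff_eq_empty.mp fun hne => hp _ hD hne hzero)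

end PEqConjSum

theorem coverIsometry_mul_star_ne [DecidableEq ι]
    (hp : ∀ C : Set V, Bbar G L C → C.Nonempty → rep.p C ≠ 0) (hA : Bbar G L A)
    (hB : IsSubordinatePartition G L A αs Bs) (hαs : ∀ i, αs i ≠ []) {l : ℕ}
    (hlen : ∀ i, (αs i).length = l) (hinj : Function.Injective αs)
    (hcase :
      (⋃ i, initialSegs (αs i)) ⊂ labelsFromLe G L A l ∨
      (∃ (i : ι) (k : ℕ), 1 ≤ k ∧ k ≤ l ∧
        (relRng G L A ((αs i).take k) ∩ G.sinks).Nonempty) ∨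
      A ⊂ ⋃ i, relRng G L A (αs i)) :
    rep.coverIsometry αs Bs * star (rep.coverIsometry αs Bs) ≠ rep.p A := by
  rw [rep.coverIsometry_mul_star_self hB]
  intro hq
  have hrange := rep.relRng_subset_of_p_eq_conjSum hL hp hq.symm hA hB hαs hlen hinj
  rcases hcase with hsegs | ⟨i, k, hk, hkl, hsink⟩ | hproper
  · exact hsegs.not_subset
      (rep.labelsFromLe_subset_iUnion_initialSegs_of_p_eq_conjSum hL hp hq.symm hA hlen)
  · rcases hkl.lt_or_eq with hkl | rfl
    · refine hsink.ne_empty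
        (rep.relRng_inter_sinks_eq_empty_of_p_eq_conjSum hL hp hq.symm hA hlen ?_ ?_)
      · exact List.ne_nil_of_length_pos (by rw [List.length_take, hlen]; omega)
      · rw [List.length_take, hlen]; omega
    · rw [List.take_of_length_le (hlen i).le] at hsink
      exact hsink.ne_empty (Set.subset_eq_empty (Set.inter_subset_inter_left _ (hrange i))
        (rep.inter_sinks_eq_empty_of_p_eq_conjSum hL hp hq.symm hA hαs))
  · exact hproper.not_subset (Set.iUnion_subset hrange)

end LRep

theorem cover_infinite_projection_general {V E 𝒜 B : Type*}
    [NonUnitalCStarAlgebra B] [PartialOrder B] [StarOrderedRing B]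
    (G : DirGraph V E) (L : E → 𝒜) (hL : Function.Surjective L)
    (rep : LRep G L B)
    (hp : ∀ C : Set V, Bbar G L C → C.Nonempty → rep.p C ≠ 0)
    (n l : ℕ) (hl : 1 ≤ l)
    (αs : Fin n → List 𝒜) (hdist : Function.Injective αs)
    (hlen : ∀ i, (αs i).length = l)
    (A : Set V) (hA : Bbar G L A) (hcover : A ⊆ ⋃ i, relRng G L A (αs i))
    (hcase :
      (⋃ i, initialSegs (αs i)) ⊂ labelsFromLe G L A l ∨
      (∃ (i : Fin n) (k : ℕ), 1 ≤ k ∧ k ≤ l ∧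
        (relRng G L A ((αs i).take k) ∩ G.sinks).Nonempty) ∨
      A ⊂ ⋃ i, relRng G L A (αs i)) :
    IsInfiniteProjection B (rep.p A) := by
  have hαs : ∀ i, αs i ≠ [] := fun i => List.ne_nil_of_length_pos (by rw [hlen i]; omega)
  obtain ⟨Bs, hB⟩ := exists_isSubordinatePartition hL hA hαs hcover
  exact isInfiniteProjection_of_star_mul_self_eq (rep.isStarProjection_p hA)
    (rep.star_coverIsometry_mul_self hL hA hB hαs hlen hdist)
    (rep.p_mul_coverIsometry hL hA hB hαs) (rep.coverIsometry_mul_p hA hB)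
    (rep.coverIsometry_mul_star_ne hL hp hA hB hαs hlen hdist hcase)

/-- Remark 3.3, generalized Proposition 3.5. Let
`{s_a, p_A}` be a representation of `(E, L, 𝔅̄)` in a C*-algebra with
`p_C ≠ 0` for every nonempty `C ∈ 𝔅̄`. If `α_1, …, α_n ∈ L*(E)` are distinct
labeled paths of the same length `l ≥ 1` with `A ⊆ ⋃ᵢ r(A, α_i)` for some
`A ∈ 𝔅̄`, then `p_A` is infinite provided (i) the union of the initial
segments of the `α_i` is a proper subset of `L(A E^{≤l})`, or (ii) some
`r(A, α_i')` contains a sink for some initial segment `α_i'` of some `α_i`, or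
(iii) `A` is a proper subset of `⋃ᵢ r(A, α_i)`. -/
theorem cover_infinite_projection {V E 𝒜 B : Type*}
    [Countable V] [Countable E] [Countable 𝒜]
    [NonUnitalCStarAlgebra B] [PartialOrder B] [StarOrderedRing B]
    (G : DirGraph V E) (L : E → 𝒜) (hL : Function.Surjective L)
    (sa : StandingAssumptions G L)
    (rep : LRep G L B)
    (hp : ∀ C : Set V, Bbar G L C → C.Nonempty → rep.p C ≠ 0)
    (n l : ℕ) (hn : 1 ≤ n) (hl : 1 ≤ l)
    (αs : Fin n → List 𝒜) (hdist : Function.Injective αs)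
    (hlab : ∀ i, IsLabelWord G L (αs i)) (hlen : ∀ i, (αs i).length = l)
    (A : Set V) (hA : Bbar G L A) (hcover : A ⊆ ⋃ i, relRng G L A (αs i))
    (hcase :
      (⋃ i, initialSegs (αs i)) ⊂ labelsFromLe G L A l ∨
      (∃ (i : Fin n) (k : ℕ), 1 ≤ k ∧ k ≤ l ∧
        (relRng G L A ((αs i).take k) ∩ G.sinks).Nonempty) ∨
      A ⊂ ⋃ i, relRng G L A (αs i)) :
    IsInfiniteProjection B (rep.p A) :=
  cover_infinite_projection_general G L hL rep hp n l hl αs hdist hlen A hA hcover hcase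

end
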